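/- Every point x in the convex hull of B(o₁, r₁) ∪ B(o₂, r₂) can be written as x = μo₁ + (1−μ)o₂ + w for some μ ∈ [0,1] and w ∈ ℝⁿ with ‖w‖ ≤ μr₁ + (1−μ)r₂, and conversely every such point lies in the convex hull. -/

import Mathlib

/-!
The convex hull of two nonempty convex sets is the union of the segments joining them, i.e. the
union over `μ ∈ [0, 1]` of `μ • B(o₁, r₁) + (1 - μ) • B(o₂, r₂)`, and this Minkowski combination
of balls is the ball `B(μ • o₁ + (1 - μ) • o₂, μ * r₁ + (1 - μ) * r₂)`.
-/

open Set Metric Pointwise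

theorem mem_convexJoin_iff_exists_smul_add_smul {𝕜 E : Type*} [Ring 𝕜] [PartialOrder 𝕜]
    [IsOrderedAddMonoid 𝕜] [AddCommGroup E] [Module 𝕜 E] {s t : Set E} {x : E} :
    x ∈ convexJoin 𝕜 s t ↔ ∃ μ ∈ Icc (0 : 𝕜) 1, x ∈ μ • s + (1 - μ) • t := by
  simp only [mem_convexJoin, segment, mem_ofPred_eq, mem_add, mem_smul_set, mem_Icc]
  constructor
  · rintro ⟨a, ha, b, hb, p, q, hp, hq, hpq, rfl⟩
    obtain rfl : q = 1 - p := eq_sub_of_add_eq' hpq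
    exact ⟨p, ⟨hp, sub_nonneg.1 hq⟩, _, ⟨a, ha, rfl⟩, _, ⟨b, hb, rfl⟩, rfl⟩
  · rintro ⟨μ, ⟨hμ₀, hμ₁⟩, _, ⟨a, ha, rfl⟩, _, ⟨b, hb, rfl⟩, rfl⟩
    exact ⟨a, ha, b, hb, μ, 1 - μ, hμ₀, sub_nonneg.2 hμ₁, add_sub_cancel _ _, rfl⟩

theorem smul_closedBall_add_smul_closedBall {E : Type*} [NormedAddCommGroup E]
    [NormedSpace ℝ E] [ProperSpace E] {a b r₁ r₂ : ℝ} (ha : 0 ≤ a) (hb : 0 ≤ b)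
    (hr₁ : 0 ≤ r₁) (hr₂ : 0 ≤ r₂) (o₁ o₂ : E) :
    a • closedBall o₁ r₁ + b • closedBall o₂ r₂ =
      closedBall (a • o₁ + b • o₂) (a * r₁ + b * r₂) := by
  rw [smul_closedBall a o₁ hr₁, smul_closedBall b o₂ hr₂, Real.norm_of_nonneg ha,
    Real.norm_of_nonneg hb]
  exact closedBall_add_closedBall (by positivity) (by positivity) _ _

theorem mem_closedBall_iff_exists_norm_le_eq_add {E : Type*} [SeminormedAddCommGroup E]
    {c x : E} {r : ℝ} : x ∈ closedBall c r ↔ ∃ w : E, ‖w‖ ≤ r ∧ x = c + w := by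
  rw [mem_closedBall_iff_norm]
  exact ⟨fun h => ⟨x - c, h, (add_sub_cancel c x).symm⟩, by rintro ⟨w, hw, rfl⟩; simpa using hw⟩

theorem mem_capsule_iff {n : ℕ}
    (o₁ o₂ : EuclideanSpace ℝ (Fin n)) (r₁ r₂ : ℝ)
    (hr₁ : 0 ≤ r₁) (hr₂ : 0 ≤ r₂) (x : EuclideanSpace ℝ (Fin n)) :
    x ∈ convexHull ℝ (Metric.closedBall o₁ r₁ ∪ Metric.closedBall o₂ r₂) ↔
      ∃ μ : ℝ, μ ∈ Set.Icc (0 : ℝ) 1 ∧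
        ∃ w : EuclideanSpace ℝ (Fin n),
          ‖w‖ ≤ μ * r₁ + (1 - μ) * r₂ ∧ x = μ • o₁ + (1 - μ) • o₂ + w := by
  rw [(convex_closedBall o₁ r₁).convexHull_union (convex_closedBall o₂ r₂)
      (nonempty_closedBall.2 hr₁) (nonempty_closedBall.2 hr₂),
    mem_convexJoin_iff_exists_smul_add_smul]
  refine exists_congr fun μ => and_congr_right fun hμ => ?_
  rw [smul_closedBall_add_smul_closedBall hμ.1 (sub_nonneg.2 hμ.2) hr₁ hr₂,
    mem_closedBall_iff_exists_norm_le_eq_add]
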